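/- Let π ∈ S_{2l}, γ ∈ S_{2l} with r cycles, A a π-invariant partition and B a γπ^{-1}-invariant partition of {1,...,2l} with A ∨ B = 1_{2l} (the one-block partition). Suppose every block of B contains at most 2 cycles of γπ^{-1}, and let c_1 be the number of blocks of B containing exactly one cycle of γπ^{-1}. Then −2l − #(π) + 2#(A) + c_1 ≤ 2 − r. -/

import Mathlib

open scoped Classical

/-- The number of cycles of `π`, counting fixed points as cycles. -/
noncomputable def numCycles {N : ℕ} (π : Equiv.Perm (Fin N)) : ℕ :=
  π.cycleType.card + (Finset.univ.filter fun x => π x = x).card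

/-- The number of cycles of `π` contained in the block `b` of the `π`-invariant
partition `B`, counted via the least elements of cycles lying in `b`. -/
noncomputable def nCyclesInBlock {N : ℕ} (π : Equiv.Perm (Fin N)) (B : Setoid (Fin N))
    (b : Quotient B) : ℕ :=
  (Finset.univ.filter (fun a : Fin N =>
    (Quotient.mk B a : Quotient B) = b ∧ ∀ x, π.SameCycle a x → a ≤ x)).card

/-- `c_i`: the number of blocks of `B` containing exactly `i` cycles of `π`. -/
noncomputable def cBlocks {N : ℕ} (π : Equiv.Perm (Fin N)) (B : Setoid (Fin N))
    (i : ℕ) : ℕ :=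
  Nat.card {b : Quotient B // nCyclesInBlock π B b = i}

/-!
Write `#σ` for the number of cycles of a permutation of an `n`-element set and `#A` for the number
of blocks of a partition. Multiplying by a transposition `(a b)` changes `#σ` by at most one, and
lowers it when `a` and `b` lie in different cycles, since it merges them. Peeling off `β` the
transpositions `(x (β x))`, each of which splits a cycle of `β`, gives by induction the genus
inequality `#(βα) + #α + #β ≤ n + 2 #(orb α ∨ orb β)`. For partitions `A ≥ orb α` and
`B ≥ orb β`, merging two cycles of `α` inside a block of `A` (or of `β` inside a block of `B`)
lowers `#α` by one and `#(βα)` by at most one, which reduces the triangle inequality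
`#(βα) + 2#A + 2#B ≤ n + #α + #β + 2#(A ∨ B)` to the genus inequality. Take `α = π`,
`β = γπ⁻¹`, use `#(A ∨ B) ≤ 1`, and `2#B - #β = c₁` because every block of `B` holds one or two
cycles of `β`.
-/

open Equiv Equiv.Perm
open scoped Finset

namespace Setoid

variable {X : Type*}

theorem map_of_le_surjective {S T : Setoid X} (h : S ≤ T) : Function.Surjective (map_of_le h) :=
  Quotient.ind fun x => ⟨Quotient.mk S x, rfl⟩

theorem card_quotient_le_of_le [Finite X] {S T : Setoid X} (h : S ≤ T) :
    Nat.card (Quotient T) ≤ Nat.card (Quotient S) :=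
  Nat.card_le_card_of_surjective _ (map_of_le_surjective h)

theorem card_quotient_lt_of_le [Finite X] {S T : Setoid X} (h : S ≤ T) {a b : X}
    (hT : T a b) (hS : ¬S a b) : Nat.card (Quotient T) < Nat.card (Quotient S) := by
  refine (card_quotient_le_of_le h).lt_of_ne fun heq => hS ?_
  have hbij := (map_of_le_surjective h).bijective_of_nat_card_le heq.ge
  exact Quotient.exact (hbij.1 (Quotient.sound hT : Quotient.mk T a = Quotient.mk T b))

/-- The smallest setoid above `T` relating `a` and `b`. -/
def joinPair (T : Setoid X) (a b : X) : Setoid X where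
  r x y := T x y ∨ (T x a ∧ T b y) ∨ (T x b ∧ T a y)
  iseqv := by
    refine ⟨fun x => .inl (T.refl x), ?_, ?_⟩
    · rintro x y (h | ⟨h₁, h₂⟩ | ⟨h₁, h₂⟩)
      · exact .inl (T.symm h)
      · exact .inr (.inr ⟨T.symm h₂, T.symm h₁⟩)
      · exact .inr (.inl ⟨T.symm h₂, T.symm h₁⟩)
    · rintro x y z (h | ⟨h₁, h₂⟩ | ⟨h₁, h₂⟩) (h' | ⟨h₁', h₂'⟩ | ⟨h₁', h₂'⟩)
      · exact .inl (T.trans h h')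
      · exact .inr (.inl ⟨T.trans h h₁', h₂'⟩)
      · exact .inr (.inr ⟨T.trans h h₁', h₂'⟩)
      · exact .inr (.inl ⟨h₁, T.trans h₂ h'⟩)
      · exact .inl (T.trans h₁ (T.trans (T.symm (T.trans h₂ h₁')) h₂'))
      · exact .inl (T.trans h₁ h₂')
      · exact .inr (.inr ⟨h₁, T.trans h₂ h'⟩)
      · exact .inl (T.trans h₁ h₂')
      · exact .inl (T.trans h₁ (T.trans (T.symm (T.trans h₂ h₁')) h₂'))

theorem le_joinPair (T : Setoid X) (a b : X) : T ≤ T.joinPair a b :=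
  fun _ _ h => .inl h

theorem joinPair_rel (T : Setoid X) (a b : X) : T.joinPair a b a b :=
  .inr (.inl ⟨T.refl a, T.refl b⟩)

theorem joinPair_le {T R : Setoid X} {a b : X} (hT : T ≤ R) (hab : R a b) :
    T.joinPair a b ≤ R := by
  rintro x y (h | ⟨ha, hb⟩ | ⟨ha, hb⟩)
  · exact hT h
  · exact R.trans (hT ha) (R.trans hab (hT hb))
  · exact R.trans (hT ha) (R.trans (R.symm hab) (hT hb))

theorem joinPair_mono {T T' : Setoid X} (h : T ≤ T') (a b : X) :
    T.joinPair a b ≤ T'.joinPair a b :=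
  joinPair_le (h.trans (le_joinPair T' a b)) (joinPair_rel T' a b)

theorem card_quotient_le_card_joinPair_add_one [Finite X] (T : Setoid X) (a b : X) :
    Nat.card (Quotient T) ≤ Nat.card (Quotient (T.joinPair a b)) + 1 := by
  let f : Quotient T → Option (Quotient (T.joinPair a b)) := fun u =>
    if u = Quotient.mk T a then none else some (map_of_le (le_joinPair T a b) u)
  have hf : Function.Injective f := by
    refine Quotient.ind fun x => Quotient.ind fun y hxy => ?_
    by_cases hx : Quotient.mk T x = Quotient.mk T a <;>
      by_cases hy : Quotient.mk T y = Quotient.mk T a <;>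
      simp only [f, hx, hy, if_true, if_false, reduceCtorEq, Option.some_inj] at hxy
    · exact hx.trans hy.symm
    · rcases Quotient.exact hxy with h | ⟨h, -⟩ | ⟨-, h⟩
      · exact Quotient.sound h
      · exact absurd (Quotient.sound h) hx
      · exact absurd (Quotient.sound (T.symm h)) hy
  simpa using Nat.card_le_card_of_injective f hf

end Setoid

namespace Equiv.Perm

section Orbits

variable {X : Type*}

noncomputable def numOrbits (σ : Perm X) : ℕ :=
  Nat.card (Quotient (SameCycle.setoid σ))

theorem sameCycle_setoid_le_iff [Finite X] {σ : Perm X} {R : Setoid X} :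
    SameCycle.setoid σ ≤ R ↔ ∀ x, R x (σ x) := by
  refine ⟨fun h x => h (sameCycle_apply_right.2 (SameCycle.refl σ x)), fun h x y hxy => ?_⟩
  obtain ⟨k, rfl⟩ := SameCycle.exists_nat_pow_eq hxy
  clear hxy
  induction k with
  | zero => exact R.refl x
  | succ k ih => rw [pow_succ', mul_apply]; exact R.trans ih (h _)

theorem sameCycle_setoid_one : SameCycle.setoid (1 : Perm X) = ⊥ := by
  ext x y
  exact sameCycle_one

theorem numOrbits_one : numOrbits (1 : Perm X) = Nat.card X := by
  rw [numOrbits, sameCycle_setoid_one, Nat.card_congr Setoid.quotientBotEquiv]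

theorem sameCycle_setoid_mul_le_sup [Finite X] (α β : Perm X) :
    SameCycle.setoid (β * α) ≤ SameCycle.setoid α ⊔ SameCycle.setoid β :=
  sameCycle_setoid_le_iff.2 fun x =>
    (SameCycle.setoid α ⊔ SameCycle.setoid β).trans
      ((le_sup_left : SameCycle.setoid α ≤ _) (sameCycle_apply_right.2 (SameCycle.refl α x)))
      ((le_sup_right : SameCycle.setoid β ≤ _) (sameCycle_apply_right.2 (SameCycle.refl β _)))

variable [Fintype X] [DecidableEq X]

theorem sameCycle_setoid_swap_mul_le (σ : Perm X) (a b : X) :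
    SameCycle.setoid (swap a b * σ) ≤ (SameCycle.setoid σ).joinPair a b := by
  refine sameCycle_setoid_le_iff.2 fun x => ?_
  refine Setoid.trans' _
    (Setoid.le_joinPair (SameCycle.setoid σ) a b (sameCycle_apply_right.2 (SameCycle.refl σ x))) ?_
  rw [mul_apply]
  rcases eq_or_ne (σ x) a with h | ha
  · rw [h, swap_apply_left]; exact Setoid.joinPair_rel _ a b
  rcases eq_or_ne (σ x) b with h | hb
  · rw [h, swap_apply_right]; exact Setoid.symm' _ (Setoid.joinPair_rel _ a b)
  · rw [swap_apply_of_ne_of_ne ha hb]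

theorem numOrbits_swap_mul_le (σ : Perm X) (a b : X) :
    numOrbits (swap a b * σ) ≤ numOrbits σ + 1 := by
  have hle : SameCycle.setoid σ ≤ (SameCycle.setoid (swap a b * σ)).joinPair a b := by
    simpa [← mul_assoc] using sameCycle_setoid_swap_mul_le (swap a b * σ) a b
  exact (Setoid.card_quotient_le_card_joinPair_add_one _ a b).trans
    (Nat.add_le_add_right (Setoid.card_quotient_le_of_le hle) 1)

theorem sameCycle_swap_mul_of_not_sameCycle {σ : Perm X} {a b : X} (h : ¬σ.SameCycle a b) :
    (swap a b * σ).SameCycle a b := by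
  have hret : ∃ q, 0 < q ∧ (σ ^ q) a = a :=
    ⟨orderOf σ, orderOf_pos σ, by rw [pow_orderOf_eq_one, one_apply]⟩
  obtain ⟨hq, hqa⟩ := Nat.find_spec hret
  -- until its first return to `a`, the `σ`-orbit of `a` avoids both `a` and `b`
  have agree : ∀ j < Nat.find hret, ((swap a b * σ) ^ j) a = (σ ^ j) a := by
    intro j
    induction j with
    | zero => intro; rfl
    | succ j ih =>
      intro hj
      have ha : (σ ^ (j + 1)) a ≠ a := fun he => Nat.find_min hret hj ⟨j.succ_pos, he⟩
      have hb : (σ ^ (j + 1)) a ≠ b := fun he => h ⟨(j + 1 : ℕ), by rw [zpow_natCast, he]⟩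
      rw [pow_succ', mul_apply, ih (by omega), mul_apply, ← mul_apply σ, ← pow_succ',
        swap_apply_of_ne_of_ne ha hb]
  obtain ⟨p, hp⟩ : ∃ p, Nat.find hret = p + 1 := ⟨_, (Nat.succ_pred_eq_of_pos hq).symm⟩
  refine ⟨(p + 1 : ℕ), ?_⟩
  rw [zpow_natCast, pow_succ', mul_apply, agree p (by omega), mul_apply, ← mul_apply σ,
    ← pow_succ', ← hp, hqa, swap_apply_left]

theorem numOrbits_swap_mul_lt {σ : Perm X} {a b : X} (h : ¬σ.SameCycle a b) :
    numOrbits (swap a b * σ) < numOrbits σ := by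
  have hmerged := sameCycle_swap_mul_of_not_sameCycle h
  have hle : SameCycle.setoid σ ≤ SameCycle.setoid (swap a b * σ) := by
    simpa [← mul_assoc] using (sameCycle_setoid_swap_mul_le (swap a b * σ) a b).trans
      (Setoid.joinPair_le le_rfl hmerged)
  exact Setoid.card_quotient_lt_of_le hle hmerged h

theorem numOrbits_lt_numOrbits_swap_apply_mul {σ : Perm X} {x : X} (hx : σ x ≠ x) :
    numOrbits σ < numOrbits (swap x (σ x) * σ) := by
  have hsc : σ.SameCycle x (σ x) := sameCycle_apply_right.2 (SameCycle.refl σ x)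
  have hfix : (swap x (σ x) * σ) x = x := by rw [mul_apply, swap_apply_right]
  exact Setoid.card_quotient_lt_of_le
    ((sameCycle_setoid_swap_mul_le σ x (σ x)).trans (Setoid.joinPair_le le_rfl hsc)) hsc
    fun h => hx (SameCycle.eq_of_left h hfix).symm

theorem numOrbits_mul_add_numOrbits_add_numOrbits_le (α β : Perm X) :
    numOrbits (β * α) + numOrbits α + numOrbits β ≤
      Nat.card X + 2 * Nat.card (Quotient (SameCycle.setoid α ⊔ SameCycle.setoid β)) := by
  induction hk : #β.support using Nat.strong_induction_on generalizing β with
  | _ k ih =>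
  obtain rfl | ⟨x, hx⟩ : β = 1 ∨ ∃ x, β x ≠ x := by
    by_cases hβ : β = 1
    · exact .inl hβ
    · exact .inr (not_forall.1 fun h => hβ (Equiv.ext h))
  · rw [sameCycle_setoid_one, sup_bot_eq, one_mul, numOrbits_one, numOrbits]
    omega
  -- `β'` fixes `x`: it has one cycle more than `β` and a smaller support
  set β' := swap x (β x) * β with hβ'
  have hβ : β = swap x (β x) * β' := by rw [hβ', swap_mul_self_mul]
  have hmul : β * α = swap x (β x) * (β' * α) := by rw [← mul_assoc, ← hβ]
  have ih' := ih _ (hk ▸ card_support_swap_mul hx) β' rfl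
  have hsplit : numOrbits β < numOrbits β' := numOrbits_lt_numOrbits_swap_apply_mul hx
  have hsup : SameCycle.setoid α ⊔ SameCycle.setoid β ≤
      (SameCycle.setoid α ⊔ SameCycle.setoid β').joinPair x (β x) := by
    refine sup_le (le_sup_left.trans (Setoid.le_joinPair _ _ _)) ?_
    have := sameCycle_setoid_swap_mul_le β' x (β x)
    rw [← hβ] at this
    exact this.trans (Setoid.joinPair_mono le_sup_right _ _)
  by_cases hc : (β' * α).SameCycle x (β x)
  · have hjoin := Setoid.card_quotient_le_of_le
      (hsup.trans (Setoid.joinPair_le le_rfl (sameCycle_setoid_mul_le_sup α β' hc)))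
    have := numOrbits_swap_mul_le (β' * α) x (β x)
    rw [← hmul] at this
    omega
  · have hjoin := (Setoid.card_quotient_le_card_joinPair_add_one _ x (β x)).trans
      (Nat.add_le_add_right (Setoid.card_quotient_le_of_le hsup) 1)
    have := numOrbits_swap_mul_lt hc
    rw [← hmul] at this
    omega

theorem numOrbits_mul_add_card_quotient_le (α β : Perm X) {A B : Setoid X}
    (hA : SameCycle.setoid α ≤ A) (hB : SameCycle.setoid β ≤ B) :
    numOrbits (β * α) + 2 * Nat.card (Quotient A) + 2 * Nat.card (Quotient B) ≤
      Nat.card X + numOrbits α + numOrbits β + 2 * Nat.card (Quotient (A ⊔ B)) := by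
  induction hk : (numOrbits α - Nat.card (Quotient A)) + (numOrbits β - Nat.card (Quotient B))
    using Nat.strong_induction_on generalizing α β with
  | _ k ih =>
  -- merge two cycles of `α` inside a block of `A`, or of `β` inside a block of `B`; when neither
  -- is possible, `A` and `B` are the cycle partitions
  by_cases hα : ∃ a b, A a b ∧ ¬α.SameCycle a b
  · obtain ⟨a, b, hab, hn⟩ := hα
    have hA' := (sameCycle_setoid_swap_mul_le α a b).trans (Setoid.joinPair_le hA hab)
    have hmerge := numOrbits_swap_mul_lt hn
    have hcard : Nat.card (Quotient A) ≤ numOrbits (swap a b * α) :=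
      Setoid.card_quotient_le_of_le hA'
    have := ih _ (by omega) _ β hA' hB rfl
    have hmul : β * α = swap (β a) (β b) * (β * (swap a b * α)) := by
      rw [swap_apply_apply, mul_assoc, inv_mul_cancel_left, mul_assoc, swap_mul_self_mul]
    have := numOrbits_swap_mul_le (β * (swap a b * α)) (β a) (β b)
    rw [← hmul] at this
    omega
  by_cases hβ : ∃ a b, B a b ∧ ¬β.SameCycle a b
  · obtain ⟨a, b, hab, hn⟩ := hβ
    have hB' := (sameCycle_setoid_swap_mul_le β a b).trans (Setoid.joinPair_le hB hab)
    have hmerge := numOrbits_swap_mul_lt hn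
    have hcard : Nat.card (Quotient B) ≤ numOrbits (swap a b * β) :=
      Setoid.card_quotient_le_of_le hB'
    have := ih _ (by omega) α _ hA hB' rfl
    have hmul : β * α = swap a b * (swap a b * β * α) := by
      rw [← mul_assoc, swap_mul_self_mul]
    have := numOrbits_swap_mul_le (swap a b * β * α) a b
    rw [← hmul] at this
    omega
  push Not at hα hβ
  obtain rfl : A = SameCycle.setoid α := le_antisymm (fun a b h => hα a b h) hA
  obtain rfl : B = SameCycle.setoid β := le_antisymm (fun a b h => hβ a b h) hB
  have := numOrbits_mul_add_numOrbits_add_numOrbits_le α β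
  unfold numOrbits at *
  omega

end Orbits

section LinearOrder

variable {X : Type*} [Fintype X] [LinearOrder X]

def cycleMins (σ : Perm X) : Finset X :=
  {a | ∀ x, σ.SameCycle a x → a ≤ x}

theorem mem_cycleMins {σ : Perm X} {a : X} : a ∈ cycleMins σ ↔ ∀ x, σ.SameCycle a x → a ≤ x := by
  simp [cycleMins]

theorem exists_mem_cycleMins_sameCycle (σ : Perm X) (x : X) :
    ∃ m ∈ cycleMins σ, σ.SameCycle x m := by
  obtain ⟨m, hm, hmin⟩ := Finset.exists_min_image {y | σ.SameCycle x y} id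
    ⟨x, by simpa using SameCycle.refl σ x⟩
  simp only [Finset.mem_filter, Finset.mem_univ, true_and, id] at hm hmin
  exact ⟨m, mem_cycleMins.2 fun y hy => hmin y (hm.trans hy), hm⟩

theorem eq_of_mem_cycleMins {σ : Perm X} {a b : X} (ha : a ∈ cycleMins σ) (hb : b ∈ cycleMins σ)
    (h : σ.SameCycle a b) : a = b :=
  le_antisymm (mem_cycleMins.1 ha b h) (mem_cycleMins.1 hb a h.symm)

theorem card_cycleMins (σ : Perm X) : #(cycleMins σ) = numOrbits σ := by
  rw [numOrbits, ← Nat.card_eq_finsetCard]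
  refine Nat.card_eq_of_bijective (fun a => Quotient.mk (SameCycle.setoid σ) a.1) ⟨?_, ?_⟩
  · rintro ⟨a, ha⟩ ⟨b, hb⟩ h
    exact Subtype.ext (eq_of_mem_cycleMins ha hb (Quotient.exact h))
  · refine Quotient.ind fun x => ?_
    obtain ⟨m, hm, hxm⟩ := exists_mem_cycleMins_sameCycle σ x
    exact ⟨⟨m, hm⟩, Quotient.sound hxm.symm⟩

theorem card_filter_not_fixed_cycleMins (σ : Perm X) :
    #{a ∈ cycleMins σ | σ a ≠ a} = σ.cycleType.card := by
  rw [cycleType_def, Multiset.card_map, ← Finset.card_def]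
  refine Finset.card_nbij σ.cycleOf ?_ ?_ ?_
  · intro a ha
    simp only [Finset.mem_coe, Finset.mem_filter] at ha
    exact cycleOf_mem_cycleFactorsFinset_iff.2 (mem_support.2 ha.2)
  · intro a ha b hb hab
    simp only [Finset.mem_coe, Finset.mem_filter] at ha hb
    exact eq_of_mem_cycleMins ha.1 hb.1
      ((sameCycle_iff_cycleOf_eq_of_mem_support (mem_support.2 ha.2) (mem_support.2 hb.2)).2 hab)
  · intro c hc
    obtain ⟨x, hx⟩ := (mem_cycleFactorsFinset_iff.1 hc).1.nonempty_support
    obtain ⟨m, hm, hxm⟩ := exists_mem_cycleMins_sameCycle σ x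
    have hxσ : x ∈ σ.support := mem_cycleFactorsFinset_support_le hc hx
    refine ⟨m, ?_, ?_⟩
    · simpa [hm] using mem_support.1 ((hxm.mem_support_iff).1 hxσ)
    · rw [← hxm.cycleOf_eq, ← cycle_is_cycleOf hx hc]

end LinearOrder

variable {n : ℕ}

theorem numCycles_eq_numOrbits (σ : Perm (Fin n)) : numCycles σ = numOrbits σ := by
  have hfix : {a ∈ cycleMins σ | σ a = a} = Finset.univ.filter fun a => σ a = a := by
    ext a
    simp only [Finset.mem_filter, Finset.mem_univ, true_and, and_iff_right_iff_imp]
    exact fun ha => mem_cycleMins.2 fun x hx => (hx.eq_of_left ha).le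
  rw [← card_cycleMins,
    ← Finset.card_filter_add_card_filter_not (s := cycleMins σ) (fun a => σ a = a), hfix,
    card_filter_not_fixed_cycleMins, numCycles, add_comm]

section Blocks

variable (σ : Perm (Fin n)) (B : Setoid (Fin n))

theorem nCyclesInBlock_eq_card_filter (b : Quotient B) :
    nCyclesInBlock σ B b = #{a ∈ cycleMins σ | Quotient.mk B a = b} := by
  rw [nCyclesInBlock, cycleMins, Finset.filter_filter]
  congr 1
  ext a
  simp only [Finset.mem_filter, Finset.mem_univ, true_and, and_comm]

theorem sum_nCyclesInBlock : ∑ b, nCyclesInBlock σ B b = numOrbits σ := by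
  simp only [nCyclesInBlock_eq_card_filter]
  rw [← card_cycleMins, Finset.card_eq_sum_card_fiberwise (t := Finset.univ)
    fun a _ => Finset.mem_univ (Quotient.mk B a)]

variable {σ B}

theorem one_le_nCyclesInBlock (hB : SameCycle.setoid σ ≤ B) (b : Quotient B) :
    1 ≤ nCyclesInBlock σ B b := by
  induction b using Quotient.ind with | _ x
  obtain ⟨m, hm, hxm⟩ := exists_mem_cycleMins_sameCycle σ x
  rw [nCyclesInBlock_eq_card_filter, Nat.one_le_iff_ne_zero, Ne, Finset.card_eq_zero,
    ← Ne, ← Finset.nonempty_iff_ne_empty]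
  exact ⟨m, Finset.mem_filter.2 ⟨hm, Quotient.sound (B.symm (hB hxm))⟩⟩

theorem cBlocks_one_add_numOrbits (hB : SameCycle.setoid σ ≤ B)
    (hle2 : ∀ b, nCyclesInBlock σ B b ≤ 2) :
    cBlocks σ B 1 + numOrbits σ = 2 * Nat.card (Quotient B) := by
  have hblock : ∀ b, (if nCyclesInBlock σ B b = 1 then 1 else 0) + nCyclesInBlock σ B b = 2 := by
    intro b
    have := one_le_nCyclesInBlock hB b
    have := hle2 b
    split_ifs <;> omega
  rw [cBlocks, Nat.card_eq_fintype_card, Fintype.card_subtype, Finset.card_filter,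
    ← sum_nCyclesInBlock σ B, ← Finset.sum_add_distrib, Finset.sum_congr rfl fun b _ => hblock b,
    Finset.sum_const, smul_eq_mul, Finset.card_univ, Nat.card_eq_fintype_card, mul_comm]

end Blocks

end Equiv.Perm

theorem order_estimate (l r : ℕ) (π γ : Equiv.Perm (Fin (2 * l)))
    (hγ : numCycles γ = r)
    (A B : Setoid (Fin (2 * l)))
    (hA : ∀ x, A x (π x)) (hB : ∀ x, B x ((γ * π⁻¹) x))
    (hAB : A ⊔ B = (⊤ : Setoid (Fin (2 * l))))
    (hle2 : ∀ b, nCyclesInBlock (γ * π⁻¹) B b ≤ 2) :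
    -(2 * (l : ℤ)) - (numCycles π : ℤ) + 2 * (Nat.card (Quotient A) : ℤ) +
        (cBlocks (γ * π⁻¹) B 1 : ℤ) ≤ 2 - (r : ℤ) := by
  have hA' : SameCycle.setoid π ≤ A := sameCycle_setoid_le_iff.2 hA
  have hB' : SameCycle.setoid (γ * π⁻¹) ≤ B := sameCycle_setoid_le_iff.2 hB
  have htriangle := numOrbits_mul_add_card_quotient_le π (γ * π⁻¹) hA' hB'
  rw [inv_mul_cancel_right, Nat.card_fin] at htriangle
  have hjoin : Nat.card (Quotient (A ⊔ B)) ≤ 1 := by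
    rw [hAB, Finite.card_le_one_iff_subsingleton, Quotient.subsingleton_iff]
  have hblocks := cBlocks_one_add_numOrbits hB' hle2
  rw [← hγ, numCycles_eq_numOrbits, numCycles_eq_numOrbits]
  omega
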